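/- Let X₁, X₂, X₃ be self-adjoint elements of a unital C*-algebra with spectrum contained in [-1,1], and let δ ≤ 1/4 be such that ‖1 - (X₁² + X₂² + X₃²)‖ < δ and ‖[Xᵢ, Xⱼ]‖ < δ for all i,j. Then the self-adjoint element L = X₁⊗σ₁ + X₂⊗σ₂ + X₃⊗σ₃ in 2×2 matrices over the algebra (where σ₁,σ₂,σ₃ are the Pauli matrices) satisfies L² > (1 - 4δ)·1; in particular L is invertible. -/

import Mathlib

open Matrix

/-- Pauli matrices -/
noncomputable def pauli1 : Matrix (Fin 2) (Fin 2) ℂ := !![0, 1; 1, 0]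
noncomputable def pauli2 : Matrix (Fin 2) (Fin 2) ℂ := !![0, -Complex.I; Complex.I, 0]
noncomputable def pauli3 : Matrix (Fin 2) (Fin 2) ℂ := !![1, 0; 0, -1]

/-- The elementary tensor `x ⊗ m` of an algebra element with a 2×2 complex matrix,
realized as a 2×2 matrix with entries in the algebra. -/
noncomputable def tensorM {A : Type*} [Ring A] [Algebra ℂ A]
    (x : A) (m : Matrix (Fin 2) (Fin 2) ℂ) : Matrix (Fin 2) (Fin 2) A :=
  Matrix.of fun i j => m i j • x

section SqrtAux

variable {B : Type*} [NormedRing B] [NormedSpace ℝ B] [CompleteSpace B]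
  [StarRing B] [StarModule ℝ B]

private noncomputable def sqrtIter (x : B) : ℕ → B
  | 0 => 0
  | n + 1 => (1/2 : ℝ) • (x + sqrtIter x n * sqrtIter x n)

private lemma exists_sqrt_one_sub (hst : Continuous (star : B → B)) {x : B}
    (hx : star x = x) (hlt : ‖x‖ < 1) :
    ∃ s : B, star s = s ∧ s * s = 1 - x := by
  set r : ℝ := (1 + ‖x‖) / 2 with hr_def
  have hx0 : (0:ℝ) ≤ ‖x‖ := norm_nonneg x
  have hr1 : r < 1 := by simp only [hr_def]; linarith
  have hxr : ‖x‖ ≤ r := by simp only [hr_def]; linarith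
  have hr0 : (0:ℝ) ≤ r := by positivity
  -- uniform bound on the iterates
  have bound : ∀ n, ‖sqrtIter x n‖ ≤ r := by
    intro n
    induction n with
    | zero => simpa [sqrtIter] using hr0
    | succ n ih =>
      have h1 : ‖sqrtIter x n * sqrtIter x n‖ ≤ r * r :=
        le_trans (norm_mul_le _ _) (mul_le_mul ih ih (norm_nonneg _) hr0)
      have h2 : r * r ≤ r := by nlinarith
      calc ‖sqrtIter x (n+1)‖ = (1/2 : ℝ) * ‖x + sqrtIter x n * sqrtIter x n‖ := by
            rw [sqrtIter, norm_smul]; norm_num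
        _ ≤ (1/2 : ℝ) * (‖x‖ + ‖sqrtIter x n * sqrtIter x n‖) := by
            have := norm_add_le x (sqrtIter x n * sqrtIter x n); linarith
        _ ≤ r := by nlinarith
  -- geometric decay of increments
  have diff : ∀ n, ‖sqrtIter x (n+1) - sqrtIter x n‖ ≤ r ^ n := by
    intro n
    induction n with
    | zero => simp [sqrtIter, norm_smul]; linarith
    | succ n ih =>
      set a := sqrtIter x (n+1)
      set b := sqrtIter x n
      have key : sqrtIter x (n+2) - sqrtIter x (n+1)
          = (1/2 : ℝ) • (a * (a - b) + (a - b) * b) := by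
        show (1/2 : ℝ) • (x + a * a) - (1/2 : ℝ) • (x + b * b) = _
        rw [← smul_sub]
        congr 1
        noncomm_ring
      have hn : ‖a * (a - b) + (a - b) * b‖ ≤ (r + r) * ‖a - b‖ := by
        calc ‖a * (a - b) + (a - b) * b‖ ≤ ‖a * (a-b)‖ + ‖(a-b) * b‖ := norm_add_le _ _
          _ ≤ ‖a‖ * ‖a-b‖ + ‖a-b‖ * ‖b‖ := add_le_add (norm_mul_le _ _) (norm_mul_le _ _)
          _ ≤ (r + r) * ‖a - b‖ := by
              have ha := bound (n+1); have hb := bound n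
              have h0 := norm_nonneg (a - b)
              nlinarith
      calc ‖sqrtIter x (n+2) - sqrtIter x (n+1)‖
          = (1/2:ℝ) * ‖a * (a - b) + (a - b) * b‖ := by rw [key, norm_smul]; norm_num
        _ ≤ (1/2:ℝ) * ((r + r) * ‖a - b‖) := by linarith [hn]
        _ = r * ‖a - b‖ := by ring
        _ ≤ r * r ^ n := by exact mul_le_mul_of_nonneg_left ih hr0
        _ = r ^ (n+1) := by ring
  -- Cauchy sequence, limit
  have hcau : CauchySeq (sqrtIter x) := by
    refine cauchySeq_of_le_geometric r 1 hr1 (fun n => ?_)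
    rw [dist_eq_norm, norm_sub_rev]
    simpa using diff n
  obtain ⟨τ, hτ⟩ := cauchySeq_tendsto_of_complete hcau
  -- the limit is a fixed point
  have hF : Continuous fun b : B => (1/2 : ℝ) • (x + b * b) :=
    ((continuous_const.add (continuous_id.mul continuous_id)).const_smul _)
  have h1 : Filter.Tendsto (fun n => sqrtIter x (n+1)) Filter.atTop (nhds τ) :=
    hτ.comp (Filter.tendsto_add_atTop_nat 1)
  have h2 : Filter.Tendsto (fun n => sqrtIter x (n+1)) Filter.atTop
      (nhds ((1/2 : ℝ) • (x + τ * τ))) := (hF.tendsto τ).comp hτ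
  have hfix : τ = (1/2 : ℝ) • (x + τ * τ) := tendsto_nhds_unique h1 h2
  -- selfadjointness of the limit
  have hsa : ∀ n, star (sqrtIter x n) = sqrtIter x n := by
    intro n
    induction n with
    | zero => simp [sqrtIter]
    | succ n ih => simp [sqrtIter, star_smul, star_add, StarMul.star_mul, hx, ih]
  have hτsa : star τ = τ := by
    have h3 : Filter.Tendsto (fun n => star (sqrtIter x n)) Filter.atTop (nhds (star τ)) :=
      (hst.tendsto τ).comp hτ
    have h4 : (fun n => star (sqrtIter x n)) = sqrtIter x := funext hsa
    rw [h4] at h3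
    exact tendsto_nhds_unique h3 hτ
  refine ⟨1 - τ, by rw [star_sub, star_one, hτsa], ?_⟩
  have h2τ : τ + τ = x + τ * τ := by
    have := congrArg (fun z => (2:ℝ) • z) hfix
    simpa [smul_smul, two_smul] using this
  calc (1 - τ) * (1 - τ) = 1 - (τ + τ) + τ * τ := by noncomm_ring
    _ = 1 - (x + τ * τ) + τ * τ := by rw [h2τ]
    _ = 1 - x := by noncomm_ring

end SqrtAux

section MatAux

attribute [local instance] Matrix.linftyOpNormedRing Matrix.linftyOpNormedSpace

variable {α : Type*} [NormedRing α] [StarRing α] [NormedStarGroup α]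

omit [StarRing α] [NormedStarGroup α] in
private lemma mat_norm_eq (M : Matrix (Fin 2) (Fin 2) α) :
    ‖M‖ = max (‖M 0 0‖ + ‖M 0 1‖) (‖M 1 0‖ + ‖M 1 1‖) := by
  rw [Matrix.linfty_opNorm_def]
  have h : (Finset.univ : Finset (Fin 2)) = {0, 1} := by decide
  rw [h, Finset.sup_insert, Finset.sup_singleton]
  simp [Fin.sum_univ_two]

private lemma mat_star_cont :
    Continuous (star : Matrix (Fin 2) (Fin 2) α → Matrix (Fin 2) (Fin 2) α) := by
  have h : ∀ M : Matrix (Fin 2) (Fin 2) α, ‖star M‖ ≤ 2 * ‖M‖ := by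
    intro M
    rw [mat_norm_eq, mat_norm_eq M]
    have e : ∀ i j : Fin 2, ‖(star M) i j‖ = ‖M j i‖ := fun i j => by
      rw [Matrix.star_apply, norm_star]
    rw [e, e, e, e]
    have t1 : ‖M 0 0‖ + ‖M 0 1‖ ≤ max (‖M 0 0‖ + ‖M 0 1‖) (‖M 1 0‖ + ‖M 1 1‖) := le_max_left _ _
    have t2 : ‖M 1 0‖ + ‖M 1 1‖ ≤ max (‖M 0 0‖ + ‖M 0 1‖) (‖M 1 0‖ + ‖M 1 1‖) := le_max_right _ _
    have n00 := norm_nonneg (M 0 0); have n01 := norm_nonneg (M 0 1)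
    have n10 := norm_nonneg (M 1 0); have n11 := norm_nonneg (M 1 1)
    apply max_le <;> linarith
  have lip : LipschitzWith 2 (star : Matrix (Fin 2) (Fin 2) α → Matrix (Fin 2) (Fin 2) α) := by
    refine LipschitzWith.of_dist_le_mul fun M N => ?_
    rw [dist_eq_norm, dist_eq_norm, ← star_sub]
    simpa using h (M - N)
  exact lip.continuous

end MatAux

/-- a fuzzy sphere of width `δ ≤ 1/4` yields an invertible selfadjoint
`L = Σ Xⱼ ⊗ σⱼ` with `L² > (1-4δ)·1` (positivity expressed à la star-order). -/
theorem fuzzy_sphere_invertible {A : Type*} [CStarAlgebra A]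
    (X₁ X₂ X₃ : A) (δ : ℝ)
    (hX₁ : IsSelfAdjoint X₁) (hX₂ : IsSelfAdjoint X₂) (hX₃ : IsSelfAdjoint X₃)
    (hs₁ : spectrum ℝ X₁ ⊆ Set.Icc (-1) 1)
    (hs₂ : spectrum ℝ X₂ ⊆ Set.Icc (-1) 1)
    (hs₃ : spectrum ℝ X₃ ⊆ Set.Icc (-1) 1)
    (hδ : δ ≤ 1 / 4)
    (hsum : ‖(1 : A) - (X₁ ^ 2 + X₂ ^ 2 + X₃ ^ 2)‖ < δ)
    (hc₁₂ : ‖X₁ * X₂ - X₂ * X₁‖ < δ)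
    (hc₁₃ : ‖X₁ * X₃ - X₃ * X₁‖ < δ)
    (hc₂₃ : ‖X₂ * X₃ - X₃ * X₂‖ < δ)
    (L : Matrix (Fin 2) (Fin 2) A)
    (hL : L = tensorM X₁ pauli1 + tensorM X₂ pauli2 + tensorM X₃ pauli3) :
    IsUnit L ∧ ∃ y : Matrix (Fin 2) (Fin 2) A,
      L ^ 2 - ((1 - 4 * δ) • (1 : Matrix (Fin 2) (Fin 2) A)) = star y * y := by
  letI : NormedRing (Matrix (Fin 2) (Fin 2) A) := Matrix.linftyOpNormedRing
  letI : NormedSpace ℝ (Matrix (Fin 2) (Fin 2) A) := Matrix.linftyOpNormedSpace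
  haveI : @CompleteSpace (Matrix (Fin 2) (Fin 2) A) (@PseudoMetricSpace.toUniformSpace _
      (inferInstance : NormedRing (Matrix (Fin 2) (Fin 2) A)).toPseudoMetricSpace) := by
    have h : CompleteSpace (Fin 2 → Fin 2 → A) := inferInstance
    exact h
  have hδ0 : 0 < δ := lt_of_le_of_lt (norm_nonneg _) hc₁₂
  -- explicit form of L
  have Le : L = !![X₃, X₁ + (-Complex.I) • X₂; X₁ + Complex.I • X₂, -X₃] := by
    rw [hL]; ext i j
    fin_cases i <;> fin_cases j <;> simp [tensorM, pauli1, pauli2, pauli3]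
  set R : Matrix (Fin 2) (Fin 2) A :=
    !![(X₁^2 + X₂^2 + X₃^2 - 1) + Complex.I • (X₁*X₂ - X₂*X₁),
       -(X₁*X₃ - X₃*X₁) + Complex.I • (X₂*X₃ - X₃*X₂);
       (X₁*X₃ - X₃*X₁) + Complex.I • (X₂*X₃ - X₃*X₂),
       (X₁^2 + X₂^2 + X₃^2 - 1) - Complex.I • (X₁*X₂ - X₂*X₁)] with hR_def
  have hLL : L * L = 1 + R := by
    rw [Le]; ext i j
    fin_cases i <;> fin_cases j <;>
      simp [hR_def, Matrix.mul_apply, Fin.sum_univ_two, Matrix.one_apply, mul_add, add_mul,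
        smul_mul_assoc, mul_smul_comm, smul_smul, sq, smul_sub, sub_smul, smul_add] <;>
      module
  -- norm of R
  have hnS : ‖X₁^2 + X₂^2 + X₃^2 - 1‖ < δ := by
    rw [← norm_neg]; simpa [neg_sub] using hsum
  have hIsmul : ∀ c : A, ‖Complex.I • c‖ = ‖c‖ := fun c => by
    rw [norm_smul, Complex.norm_I, one_mul]
  have hent : ∀ i j, ‖R i j‖ < 2 * δ := by
    intro i j
    fin_cases i <;> fin_cases j <;>
      simp only [hR_def, Matrix.cons_val', Matrix.cons_val_zero, Matrix.cons_val_one,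
        Matrix.head_cons, Matrix.empty_val', Matrix.cons_val_fin_one, Matrix.head_fin_const]
    · calc ‖(X₁^2 + X₂^2 + X₃^2 - 1) + Complex.I • (X₁*X₂ - X₂*X₁)‖
          ≤ ‖X₁^2 + X₂^2 + X₃^2 - 1‖ + ‖Complex.I • (X₁*X₂ - X₂*X₁)‖ := norm_add_le _ _
        _ < 2 * δ := by rw [hIsmul]; linarith
    · calc ‖-(X₁*X₃ - X₃*X₁) + Complex.I • (X₂*X₃ - X₃*X₂)‖
          ≤ ‖-(X₁*X₃ - X₃*X₁)‖ + ‖Complex.I • (X₂*X₃ - X₃*X₂)‖ := norm_add_le _ _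
        _ < 2 * δ := by rw [hIsmul, norm_neg]; linarith
    · calc ‖(X₁*X₃ - X₃*X₁) + Complex.I • (X₂*X₃ - X₃*X₂)‖
          ≤ ‖(X₁*X₃ - X₃*X₁)‖ + ‖Complex.I • (X₂*X₃ - X₃*X₂)‖ := norm_add_le _ _
        _ < 2 * δ := by rw [hIsmul]; linarith
    · calc ‖(X₁^2 + X₂^2 + X₃^2 - 1) - Complex.I • (X₁*X₂ - X₂*X₁)‖
          ≤ ‖X₁^2 + X₂^2 + X₃^2 - 1‖ + ‖Complex.I • (X₁*X₂ - X₂*X₁)‖ := norm_sub_le _ _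
        _ < 2 * δ := by rw [hIsmul]; linarith
  have hRnorm : ‖R‖ < 4 * δ := by
    rw [mat_norm_eq]
    have h00 := hent 0 0; have h01 := hent 0 1
    have h10 := hent 1 0; have h11 := hent 1 1
    apply max_lt <;> linarith
  -- selfadjointness of R
  have hsL : star L = L := by
    rw [Le]; ext i j
    fin_cases i <;> fin_cases j <;>
      simp [Matrix.star_apply, star_smul, hX₁.star_eq, hX₂.star_eq, hX₃.star_eq, add_comm]
  have hsR : star R = R := by
    have : star (L * L) = L * L := by rw [StarMul.star_mul, hsL]
    rw [hLL, star_add, star_one] at this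
    exact (add_right_inj (1 : Matrix (Fin 2) (Fin 2) A)).mp this
  -- invertibility of L
  have hRlt1 : ‖-R‖ < 1 := by rw [norm_neg]; linarith
  let u : (Matrix (Fin 2) (Fin 2) A)ˣ := Units.oneSub (-R) hRlt1
  have hu : L * L = u.val := by
    show L * L = 1 - (-R); rw [hLL, sub_neg_eq_add]
  have hcomm : Commute L u.val := by
    rw [← hu]; exact (Commute.refl L).mul_right (Commute.refl L)
  have hcomm' : Commute L (u⁻¹).val := hcomm.units_inv_right
  have hunit : IsUnit L := by
    refine ⟨⟨L, L * (u⁻¹).val, ?_, ?_⟩, rfl⟩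
    · rw [← mul_assoc, hu, u.mul_inv]
    · rw [hcomm'.eq, mul_assoc, hu, u.inv_mul]
  refine ⟨hunit, ?_⟩
  -- the square root
  set ε : ℝ := 4 * δ with hε_def
  have hε0 : 0 < ε := by positivity
  set x : Matrix (Fin 2) (Fin 2) A := -(ε⁻¹ • R) with hx_def
  have hxsa : star x = x := by rw [hx_def, star_neg, star_smul, star_trivial, hsR]
  have hxnorm : ‖x‖ < 1 := by
    rw [hx_def, norm_neg, norm_smul, Real.norm_eq_abs, abs_of_pos (inv_pos.mpr hε0)]
    calc ε⁻¹ * ‖R‖ < ε⁻¹ * ε := by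
          exact mul_lt_mul_of_pos_left hRnorm (inv_pos.mpr hε0)
      _ = 1 := inv_mul_cancel₀ (ne_of_gt hε0)
  obtain ⟨s, hssa, hss⟩ := exists_sqrt_one_sub mat_star_cont hxsa hxnorm
  refine ⟨Real.sqrt ε • s, ?_⟩
  have hsqrt : Real.sqrt ε * Real.sqrt ε = ε := Real.mul_self_sqrt (le_of_lt hε0)
  have hyy : star (Real.sqrt ε • s) * (Real.sqrt ε • s) = ε • (s * s) := by
    rw [star_smul, star_trivial, hssa, smul_mul_assoc, mul_smul_comm, smul_smul, hsqrt]
  rw [hyy, hss, hx_def, sub_neg_eq_add, smul_add, smul_smul,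
    mul_inv_cancel₀ (ne_of_gt hε0), one_smul]
  have hL2 : L ^ 2 = 1 + R := by rw [sq, hLL]
  rw [hL2, sub_smul, one_smul]
  module
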